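/- arXiv:1703.01561 — 11 statements merged into one kernel-verified Lean document; each statement's English description precedes it below -/
import Mathlib

section
/- Let G be a diamond-free finite simple graph and let H be obtained from G by multiplying a vertex v by some k ≥ 2. Then H is diamond-free if and only if v does not belong to any triangle of G. -/
open SimpleGraph

/-- A graph is gap-free if no two disjoint edges induce a subgraph with exactly those two edges. -/
def IsGapFree {V : Type*} (G : SimpleGraph V) : Prop :=
  ¬ ∃ a b c d : V, a ≠ b ∧ a ≠ c ∧ a ≠ d ∧ b ≠ c ∧ b ≠ d ∧ c ≠ d ∧
    G.Adj a b ∧ G.Adj c d ∧ ¬G.Adj a c ∧ ¬G.Adj a d ∧ ¬G.Adj b c ∧ ¬G.Adj b d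

/-- A graph is diamond-free if it has no induced `K₄` minus an edge
(vertices `a b c d`, edges `ab, ac, bc, ad, cd`, non-edge `bd`). -/
def IsDiamondFree {V : Type*} (G : SimpleGraph V) : Prop :=
  ¬ ∃ a b c d : V, a ≠ b ∧ a ≠ c ∧ a ≠ d ∧ b ≠ c ∧ b ≠ d ∧ c ≠ d ∧
    G.Adj a b ∧ G.Adj a c ∧ G.Adj b c ∧ G.Adj a d ∧ G.Adj c d ∧ ¬G.Adj b d

/-- The clique number of a graph. -/
noncomputable def cliqueNum' {V : Type*} (G : SimpleGraph V) : ℕ :=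
  sSup {n | ∃ s : Finset V, G.IsNClique n s}

/-- The cycle graph on `Fin n` (for `n ≥ 3`). -/
def cycG (n : ℕ) : SimpleGraph (Fin n) :=
  SimpleGraph.fromRel (fun i j => (j : ℕ) = ((i : ℕ) + 1) % n)

/-- `G` has an induced cycle on `n` vertices. -/
def HasInducedCycle {V : Type*} (G : SimpleGraph V) (n : ℕ) : Prop :=
  ∃ f : Fin n → V, Function.Injective f ∧ ∀ i j, G.Adj (f i) (f j) ↔ (cycG n).Adj i j

/-- A graph is chordal if it has no induced cycle on `n ≥ 4` vertices. -/
def IsChordal {V : Type*} (G : SimpleGraph V) : Prop :=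
  ∀ n, 4 ≤ n → ¬ HasInducedCycle G n

/-- The graph obtained from `G` by multiplying the vertex `v` by the independent set `U`:
`v` is replaced by the vertices of `U`, each adjacent exactly to the neighbors of `v`,
with `U` independent and all other adjacencies as in `G`. -/
def VertexMul {V : Type*} (U : Type*) (G : SimpleGraph V) (v : V) :
    SimpleGraph ({x : V // x ≠ v} ⊕ U) :=
  SimpleGraph.fromRel (fun a b =>
    match a, b with
    | Sum.inl x, Sum.inl y => G.Adj x.1 y.1
    | Sum.inl x, Sum.inr _ => G.Adj x.1 v
    | Sum.inr _, Sum.inl y => G.Adj y.1 v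
    | Sum.inr _, Sum.inr _ => False)

lemma vm_adj_ll {V : Type*} {U : Type*} {G : SimpleGraph V} {v : V}
    {x y : {x : V // x ≠ v}} :
    (VertexMul U G v).Adj (Sum.inl x) (Sum.inl y) ↔ G.Adj x.1 y.1 := by
  constructor
  · rintro ⟨_, h | h⟩
    · exact h
    · exact h.symm
  · intro h
    refine ⟨?_, Or.inl h⟩
    intro he
    exact h.ne (congrArg Subtype.val (Sum.inl.inj he))

lemma vm_adj_lr {V : Type*} {U : Type*} {G : SimpleGraph V} {v : V}
    {x : {x : V // x ≠ v}} {u : U} :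
    (VertexMul U G v).Adj (Sum.inl x) (Sum.inr u) ↔ G.Adj x.1 v := by
  constructor
  · rintro ⟨_, h | h⟩ <;> exact h
  · intro h
    exact ⟨by simp, Or.inl h⟩

lemma vm_adj_rl {V : Type*} {U : Type*} {G : SimpleGraph V} {v : V}
    {x : {x : V // x ≠ v}} {u : U} :
    (VertexMul U G v).Adj (Sum.inr u) (Sum.inl x) ↔ G.Adj x.1 v := by
  rw [SimpleGraph.adj_comm]; exact vm_adj_lr

lemma vm_adj_rr {V : Type*} {U : Type*} {G : SimpleGraph V} {v : V} {u u' : U} :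
    ¬ (VertexMul U G v).Adj (Sum.inr u) (Sum.inr u') := by
  rintro ⟨_, h | h⟩ <;> exact h

/-- If G is diamond-free and H is obtained by multiplying a vertex v by k ≥ 2, then
H is diamond-free iff v lies on no triangle of G. -/
theorem stmt_2 {V : Type*} [Fintype V] (G : SimpleGraph V) (v : V) (k : ℕ) (hk : 2 ≤ k)
    (hG : IsDiamondFree G) :
    IsDiamondFree (VertexMul (Fin k) G v) ↔
      ¬ ∃ x y : V, G.Adj v x ∧ G.Adj v y ∧ G.Adj x y := by
  constructor
  · intro hH
    rintro ⟨x, y, hvx, hvy, hxy⟩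
    apply hH
    have h0 : (0 : ℕ) < k := by omega
    have h1 : (1 : ℕ) < k := by omega
    refine ⟨Sum.inl ⟨x, hvx.ne'⟩, Sum.inr ⟨0, h0⟩, Sum.inl ⟨y, hvy.ne'⟩, Sum.inr ⟨1, h1⟩,
      by simp, ?_, by simp, by simp, ?_, by simp, ?_, ?_, ?_, ?_, ?_, vm_adj_rr⟩
    · intro h
      exact hxy.ne (congrArg Subtype.val (Sum.inl.inj h))
    · simp [Fin.ext_iff]
    · exact vm_adj_lr.mpr hvx.symm
    · exact vm_adj_ll.mpr hxy
    · exact vm_adj_rl.mpr hvy.symm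
    · exact vm_adj_lr.mpr hvx.symm
    · exact vm_adj_lr.mpr hvy.symm
  · intro hT
    rintro ⟨a, b, c, d, hab', hac', had', hbc', hbd', hcd',
      hAB, hAC, hBC, hAD, hCD, hBD⟩
    set H := VertexMul (Fin k) G v with hHdef
    let φ : ({x : V // x ≠ v} ⊕ Fin k) → V := fun p =>
      match p with
      | Sum.inl x => x.1
      | Sum.inr _ => v
    have hmono : ∀ p q, H.Adj p q → G.Adj (φ p) (φ q) := by
      rintro (x | u) (y | u') h
      · exact vm_adj_ll.mp h
      · exact vm_adj_lr.mp h
      · exact (vm_adj_rl.mp h).symm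
      · exact absurd h vm_adj_rr
    have tri : ∀ (p r : {x : V // x ≠ v} ⊕ Fin k) (u : Fin k),
        H.Adj p (Sum.inr u) → H.Adj (Sum.inr u) r → H.Adj p r → False := by
      intro p r u h1 h2 h3
      exact hT ⟨φ p, φ r, (hmono _ _ h1).symm, hmono _ _ h2, hmono _ _ h3⟩
    obtain ⟨xa, rfl⟩ : ∃ x, a = Sum.inl x := by
      rcases a with x | u
      · exact ⟨x, rfl⟩
      · exact absurd (tri b c u hAB.symm hAC hBC) id
    obtain ⟨xb, rfl⟩ : ∃ x, b = Sum.inl x := by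
      rcases b with x | u
      · exact ⟨x, rfl⟩
      · exact absurd (tri _ c u hAB hBC hAC) id
    obtain ⟨xc, rfl⟩ : ∃ x, c = Sum.inl x := by
      rcases c with x | u
      · exact ⟨x, rfl⟩
      · exact absurd (tri _ _ u hAC hBC.symm hAB) id
    obtain ⟨xd, rfl⟩ : ∃ x, d = Sum.inl x := by
      rcases d with x | u
      · exact ⟨x, rfl⟩
      · exact absurd (tri _ _ u hAD hCD.symm hAC) id
    exact hG ⟨xa.1, xb.1, xc.1, xd.1,
      (vm_adj_ll.mp hAB).ne, (vm_adj_ll.mp hAC).ne, (vm_adj_ll.mp hAD).ne,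
      (vm_adj_ll.mp hBC).ne, fun h => hbd' (congrArg Sum.inl (Subtype.ext h)),
      fun h => hcd' (congrArg Sum.inl (Subtype.ext h)),
      vm_adj_ll.mp hAB, vm_adj_ll.mp hAC, vm_adj_ll.mp hBC,
      vm_adj_ll.mp hAD, vm_adj_ll.mp hCD, fun h => hBD (vm_adj_ll.mpr h)⟩
end

section
/- Let G be a gap-free, diamond-free finite simple graph with clique number ω(G) ≥ 3 and no isolated vertices, and let K be a dominating clique of G on ω(G) vertices. Then every vertex of G outside K is adjacent to exactly one vertex of K. -/
open SimpleGraph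

/-- In a (gap, diamond)-free graph with clique number at least 3 and no isolated vertices,
every vertex outside a dominating clique on ω(G) vertices has exactly one neighbor in it. -/
theorem stmt_3 {V : Type*} [Fintype V] (G : SimpleGraph V)
    (hgap : IsGapFree G) (hdia : IsDiamondFree G) (hw : 3 ≤ cliqueNum' G)
    (hiso : ∀ v : V, ∃ w, G.Adj v w)
    (K : Finset V) (hK : G.IsNClique (cliqueNum' G) K)
    (hdom : ∀ v : V, v ∉ K → ∃ u ∈ K, G.Adj v u) :
    ∀ v : V, v ∉ K → ∃! u, u ∈ K ∧ G.Adj v u := by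
  classical
  intro v hv
  obtain ⟨u, hu, huv⟩ := hdom v hv
  refine ⟨u, ⟨hu, huv⟩, ?_⟩
  rintro u' ⟨hu', hu'v⟩
  by_contra hne
  -- u' and u are two distinct neighbors of v in K
  by_cases hall : ∀ w ∈ K, G.Adj v w
  · -- larger clique
    have hclique : G.IsNClique (cliqueNum' G + 1) (insert v K) := by
      constructor
      · rw [Finset.coe_insert]
        exact hK.1.insert (fun b hb _ => (hall b hb))
      · rw [Finset.card_insert_of_notMem hv, hK.2]
    have hbdd : BddAbove {n | ∃ s : Finset V, G.IsNClique n s} := by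
      refine ⟨Fintype.card V, ?_⟩
      rintro n ⟨s, hs⟩
      rw [← hs.2]
      exact s.card_le_univ
    have : cliqueNum' G + 1 ≤ cliqueNum' G :=
      le_csSup hbdd ⟨insert v K, hclique⟩
    omega
  · push_neg at hall
    obtain ⟨w, hw', hwv⟩ := hall
    have hvK : ∀ x ∈ K, v ≠ x := fun x hx h => hv (h ▸ hx)
    have hwu : w ≠ u := fun h => hwv (h ▸ huv)
    have hwu' : w ≠ u' := fun h => hwv (h ▸ hu'v)
    exact hdia ⟨u', w, u, v,
      hwu'.symm, hne, (hvK u' hu').symm, hwu, (hvK w hw').symm, (hvK u hu).symm,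
      hK.1 hu' hw' hwu'.symm, hK.1 hu' hu hne, hK.1 hw' hu hwu,
      hu'v.symm, huv.symm, fun h => hwv h.symm⟩
end

section
/- Let G be a gap-free, diamond-free finite simple graph with clique number ω(G) ≥ 4 and no isolated vertices, and let K be a dominating clique on ω(G) vertices. Then the set of vertices of G outside K is an independent set. -/
open SimpleGraph

/-- In a (gap, diamond)-free graph with clique number at least 4 and no isolated vertices,
the vertices outside a dominating clique on ω(G) vertices form an independent set. -/
theorem stmt_4 {V : Type*} [Fintype V] (G : SimpleGraph V)
    (hgap : IsGapFree G) (hdia : IsDiamondFree G) (hw : 4 ≤ cliqueNum' G)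
    (hiso : ∀ v : V, ∃ w, G.Adj v w)
    (K : Finset V) (hK : G.IsNClique (cliqueNum' G) K)
    (hdom : ∀ v : V, v ∉ K → ∃ u ∈ K, G.Adj v u) :
    ∀ v : V, v ∉ K → ∀ w : V, w ∉ K → v ≠ w → ¬ G.Adj v w := by
  classical
  have hbdd : BddAbove {n | ∃ s : Finset V, G.IsNClique n s} := by
    refine ⟨Fintype.card V, ?_⟩
    rintro n ⟨s, hs⟩
    rw [← hs.2, ← Finset.card_univ]
    exact Finset.card_le_univ s
  have key : ∀ v, v ∉ K → ∀ a ∈ K, ∀ b ∈ K, a ≠ b → G.Adj v a → G.Adj v b → False := by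
    intro v hv a ha b hb hab hva hvb
    have hall : ∀ c ∈ K, G.Adj v c := by
      intro c hc
      by_cases hca : c = a
      · exact hca ▸ hva
      by_cases hcb : c = b
      · exact hcb ▸ hvb
      by_contra hvc
      exact hdia ⟨a, c, b, v,
        fun h => hca h.symm, hab, by rintro rfl; exact hv ha,
        fun h => hcb h, by rintro rfl; exact hv hc, by rintro rfl; exact hv hb,
        hK.1 ha hc (fun h => hca h.symm), hK.1 ha hb hab, hK.1 hc hb hcb,
        hva.symm, hvb.symm, fun h => hvc h.symm⟩
    have hclique : G.IsNClique (cliqueNum' G + 1) (insert v K) := by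
      constructor
      · rw [Finset.coe_insert]
        intro x hx y hy hxy
        rcases hx with rfl | hx
        · rcases hy with rfl | hy
          · exact absurd rfl hxy
          · exact hall y hy
        · rcases hy with rfl | hy
          · exact (hall x hx).symm
          · exact hK.1 hx hy hxy
      · rw [Finset.card_insert_of_notMem hv, hK.2]
    have : cliqueNum' G + 1 ≤ cliqueNum' G := le_csSup hbdd ⟨_, hclique⟩
    omega
  intro v hv w hw hvw hadj
  obtain ⟨uv, huvK, hvu⟩ := hdom v hv
  obtain ⟨uw, huwK, hwu⟩ := hdom w hw
  have hcard : 1 < (K \ {uv, uw}).card := by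
    have h1 : K.card - ({uv, uw} : Finset V).card ≤ (K \ {uv, uw}).card :=
      Finset.le_card_sdiff _ _
    have h2 : ({uv, uw} : Finset V).card ≤ 2 :=
      (Finset.card_insert_le _ _).trans (by simp)
    have h3 : K.card = cliqueNum' G := hK.2
    omega
  obtain ⟨c, hc, d, hd, hcd⟩ := Finset.one_lt_card.mp hcard
  rw [Finset.mem_sdiff] at hc hd
  simp only [Finset.mem_insert, Finset.mem_singleton, not_or] at hc hd
  obtain ⟨hcK, hcuv, hcuw⟩ := hc
  obtain ⟨hdK, hduv, hduw⟩ := hd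
  refine hgap ⟨v, w, c, d, hvw, ?_, ?_, ?_, ?_, hcd, hadj, hK.1 hcK hdK hcd, ?_, ?_, ?_, ?_⟩
  · rintro rfl; exact hv hcK
  · rintro rfl; exact hv hdK
  · rintro rfl; exact hw hcK
  · rintro rfl; exact hw hdK
  · exact fun h => key v hv uv huvK c hcK (fun e => hcuv e.symm) hvu h
  · exact fun h => key v hv uv huvK d hdK (fun e => hduv e.symm) hvu h
  · exact fun h => key w hw uw huwK c hcK (fun e => hcuw e.symm) hwu h
  · exact fun h => key w hw uw huwK d hdK (fun e => hduw e.symm) hwu h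
end

section
/- Let G be a gap-free, diamond-free finite simple graph with clique number ω(G) ≥ 4 and no isolated vertices. Then the complement graph G^c is chordal. -/
open SimpleGraph

/-- If G is (gap, diamond)-free with clique number at least 4 and no isolated vertices,
then the complement of G is chordal. -/
theorem stmt_5 {V : Type*} [Fintype V] (G : SimpleGraph V)
    (hgap : IsGapFree G) (hdia : IsDiamondFree G) (hw : 4 ≤ cliqueNum' G)
    (hiso : ∀ v : V, ∃ w, G.Adj v w) :
    IsChordal Gᶜ := by
  classical
  -- obtain a maximum clique s
  have hbdd : BddAbove {n | ∃ s : Finset V, G.IsNClique n s} := by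
    refine ⟨Fintype.card V, fun m hm => ?_⟩
    obtain ⟨s, hs⟩ := hm
    calc m = s.card := hs.card_eq.symm
      _ ≤ Fintype.card V := Finset.card_le_univ s
  have hmem : cliqueNum' G ∈ {n | ∃ s : Finset V, G.IsNClique n s} :=
    Nat.sSup_mem ⟨0, ∅, by simp⟩ hbdd
  obtain ⟨s, hs⟩ := hmem
  have hcard : 4 ≤ s.card := by rw [hs.card_eq]; exact hw
  have hclique : ∀ a ∈ s, ∀ b ∈ s, a ≠ b → G.Adj a b := by
    intro a ha b hb hne
    exact hs.isClique (Finset.mem_coe.mpr ha) (Finset.mem_coe.mpr hb) hne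
  -- no vertex outside s is adjacent to all of s
  have hmax : ∀ x, x ∉ s → ¬ (∀ a ∈ s, G.Adj x a) := by
    intro x hx hall
    have hcl : G.IsNClique (cliqueNum' G + 1) (insert x s) := by
      constructor
      · intro a ha b hb hne
        simp only [Finset.coe_insert, Set.mem_insert_iff, Finset.mem_coe] at ha hb
        rcases ha with rfl | ha
        · rcases hb with rfl | hb
          · exact absurd rfl hne
          · exact hall b hb
        · rcases hb with rfl | hb
          · exact (hall a ha).symm
          · exact hclique a ha b hb hne
      · rw [Finset.card_insert_of_notMem hx, hs.card_eq]
    have : cliqueNum' G + 1 ≤ cliqueNum' G := le_csSup hbdd ⟨_, hcl⟩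
    omega
  -- every vertex outside s has at most one neighbor in s
  have hone : ∀ x, x ∉ s → (s.filter (fun a => G.Adj x a)).card ≤ 1 := by
    intro x hx
    by_contra h
    push_neg at h
    obtain ⟨a, ha, b, hb, hab⟩ := Finset.one_lt_card.mp h
    rw [Finset.mem_filter] at ha hb
    apply hmax x hx
    intro c hc
    by_cases hca : c = a
    · exact hca ▸ ha.2
    by_cases hcb : c = b
    · exact hcb ▸ hb.2
    by_contra hxc
    exact hdia ⟨a, x, b, c,
      fun h => hx (h ▸ ha.1), hab, Ne.symm hca, fun h => hx (h ▸ hb.1),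
      fun h => hx (h ▸ hc), Ne.symm hcb,
      ha.2.symm, hclique a ha.1 b hb.1 hab, hb.2,
      hclique a ha.1 c hc (Ne.symm hca), hclique b hb.1 c hc (Ne.symm hcb), hxc⟩
  -- every edge of G meets s
  have hedge : ∀ x y, G.Adj x y → x ∈ s ∨ y ∈ s := by
    intro x y hxy
    by_contra h
    push_neg at h
    obtain ⟨hx, hy⟩ := h
    set T := s.filter (fun a => ¬G.Adj x a ∧ ¬G.Adj y a) with hT
    have hTcard : 2 ≤ T.card := by
      have h1 : s.filter (fun a => G.Adj x a ∨ G.Adj y a)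
          = s.filter (fun a => G.Adj x a) ∪ s.filter (fun a => G.Adj y a) :=
        Finset.filter_or _ _ _
      have h2 : (s.filter (fun a => G.Adj x a ∨ G.Adj y a)).card ≤ 2 := by
        rw [h1]
        calc _ ≤ _ := Finset.card_union_le _ _
          _ ≤ 1 + 1 := Nat.add_le_add (hone x hx) (hone y hy)
      have h3 : T = s \ s.filter (fun a => G.Adj x a ∨ G.Adj y a) := by
        ext a
        simp only [hT, Finset.mem_sdiff, Finset.mem_filter]
        tauto
      rw [h3, Finset.card_sdiff_of_subset (Finset.filter_subset _ _)]
      omega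
    obtain ⟨a, ha, b, hb, hab⟩ := Finset.one_lt_card.mp hTcard
    rw [hT, Finset.mem_filter] at ha hb
    exact hgap ⟨x, y, a, b, hxy.ne,
      fun h => hx (h ▸ ha.1), fun h => hx (h ▸ hb.1),
      fun h => hy (h ▸ ha.1), fun h => hy (h ▸ hb.1), hab,
      hxy, hclique a ha.1 b hb.1 hab,
      ha.2.1, hb.2.1, ha.2.2, hb.2.2⟩
  -- now the chordality argument
  intro n hn hcyc
  obtain ⟨f, hinj, hadj⟩ := hcyc
  have hnpos : 0 < n := by omega
  set F : ℕ → V := fun k => f ⟨k % n, Nat.mod_lt _ hnpos⟩ with hFdef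
  have hne : ∀ a b : ℕ, a < b → b - a < n → a % n ≠ b % n := by
    intro a b h1 h2 e
    have hd : n ∣ b - a := (Nat.modEq_iff_dvd' (le_of_lt h1)).mp e
    have := Nat.le_of_dvd (by omega) hd
    omega
  have hF : ∀ k, F (k + n) = F k := by
    intro k; simp only [hFdef, Nat.add_mod_right]
  have hmod1 : ∀ k : ℕ, (k % n + 1) % n = (k + 1) % n := by
    intro k
    conv_rhs => rw [Nat.add_mod]
    rw [Nat.mod_eq_of_lt (show 1 < n by omega)]
  have hFinne : ∀ a b : ℕ, a < b → b - a < n →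
      (⟨a % n, Nat.mod_lt _ hnpos⟩ : Fin n) ≠ ⟨b % n, Nat.mod_lt _ hnpos⟩ := by
    intro a b h1 h2 e
    exact hne a b h1 h2 (congrArg Fin.val e)
  -- consecutive vertices are complement-adjacent
  have hc1 : ∀ k, Gᶜ.Adj (F k) (F (k + 1)) := by
    intro k
    apply (hadj _ _).mpr
    rw [cycG, SimpleGraph.fromRel_adj]
    refine ⟨hFinne k (k+1) (by omega) (by omega), Or.inl ?_⟩
    exact (hmod1 k).symm
  -- distance-two vertices are G-adjacent
  have hc2 : ∀ k, G.Adj (F k) (F (k + 2)) := by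
    intro k
    by_contra hna
    have hcadj : Gᶜ.Adj (F k) (F (k + 2)) :=
      (SimpleGraph.compl_adj _ _ _).mpr ⟨hinj.ne (hFinne k (k+2) (by omega) (by omega)), hna⟩
    have := (hadj _ _).mp hcadj
    rw [cycG, SimpleGraph.fromRel_adj] at this
    obtain ⟨-, h | h⟩ := this
    · simp only at h
      rw [hmod1 k] at h
      exact hne (k+1) (k+2) (by omega) (by omega) h.symm
    · simp only at h
      rw [hmod1 (k+2)] at h
      exact hne k (k+3) (by omega) (by omega) h
  -- basic non-adjacency from hc1
  have hnadj1 : ∀ k, ¬G.Adj (F k) (F (k + 1)) := fun k => ((SimpleGraph.compl_adj _ _ _).mp (hc1 k)).2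
  -- find a cycle vertex outside s
  have hex : ∃ k₀ : ℕ, F k₀ ∉ s := by
    by_cases h0 : F 0 ∈ s
    · refine ⟨1, fun h1 => ?_⟩
      exact hnadj1 0 (hclique _ h0 _ h1 (hc1 0).ne)
    · exact ⟨0, h0⟩
  obtain ⟨k₀, hk₀⟩ := hex
  -- F (k₀+2) ∈ s
  have h2 : F (k₀ + 2) ∈ s := (hedge _ _ (hc2 k₀)).resolve_left hk₀
  -- F (k₀+n-2) ∈ s
  have hm2 : F (k₀ + n - 2) ∈ s := by
    have hadj' := hc2 (k₀ + n - 2)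
    have he : k₀ + n - 2 + 2 = k₀ + n := by omega
    rw [he, hF k₀] at hadj'
    exact (hedge _ _ hadj').resolve_right hk₀
  -- F (k₀+1) ∉ s
  have h1 : F (k₀ + 1) ∉ s := by
    intro h
    have hcadj := hc1 (k₀ + 1)
    have : k₀ + 1 + 1 = k₀ + 2 := by omega
    rw [this] at hcadj
    exact ((SimpleGraph.compl_adj _ _ _).mp hcadj).2 (hclique _ h _ h2 hcadj.ne)
  -- F (k₀+n-1) ∉ s
  have hm1 : F (k₀ + n - 1) ∉ s := by
    intro h
    have hcadj := hc1 (k₀ + n - 2)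
    have : k₀ + n - 2 + 1 = k₀ + n - 1 := by omega
    rw [this] at hcadj
    exact ((SimpleGraph.compl_adj _ _ _).mp hcadj).2 (hclique _ hm2 _ h hcadj.ne)
  -- final contradiction: edge F(k₀+n-1) -- F(k₀+1) misses s
  have hfin := hc2 (k₀ + n - 1)
  have he : k₀ + n - 1 + 2 = k₀ + 1 + n := by omega
  rw [he, hF (k₀ + 1)] at hfin
  exact (hedge _ _ hfin).elim hm1 h1
end

section
/- Let G be a gap-free, diamond-free finite simple graph with clique number exactly 3 and no isolated vertices, let K be a dominating triangle of G, and let x be a vertex of K. Then N(x) \ V(K) is an independent set. -/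
open SimpleGraph

/-- If G is (gap, diamond)-free with clique number exactly 3 and no isolated vertices,
K a dominating triangle and x ∈ K, then N(x) minus K is independent. -/
theorem stmt_6 {V : Type*} [Fintype V] (G : SimpleGraph V)
    (hgap : IsGapFree G) (hdia : IsDiamondFree G) (hw : cliqueNum' G = 3)
    (hiso : ∀ v : V, ∃ w, G.Adj v w)
    (K : Finset V) (hK : G.IsNClique 3 K)
    (hdom : ∀ v : V, v ∉ K → ∃ u ∈ K, G.Adj v u)
    (x : V) (hx : x ∈ K) :
    ∀ u v : V, G.Adj x u → u ∉ K → G.Adj x v → v ∉ K → u ≠ v → ¬ G.Adj u v := by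
  
  classical
  intro u v hxu huK hxv hvK huv huvAdj
  -- extract the other two vertices of K
  have hKc : K.card = 3 := hK.2
  have herase : (K.erase x).card = 2 := by
    rw [Finset.card_erase_of_mem hx, hKc]
  obtain ⟨y, z, hyz, hYZ⟩ := Finset.card_eq_two.mp herase
  have hyK : y ∈ K := Finset.mem_of_mem_erase (hYZ ▸ (by simp : y ∈ ({y,z} : Finset V)))
  have hzK : z ∈ K := Finset.mem_of_mem_erase (hYZ ▸ (by simp : z ∈ ({y,z} : Finset V)))
  have hxy : x ≠ y := by
    intro h; have : y ∈ K.erase x := by rw [hYZ]; simp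
    exact (Finset.notMem_erase x K) (h ▸ this)
  have hxz : x ≠ z := by
    intro h; have : z ∈ K.erase x := by rw [hYZ]; simp
    exact (Finset.notMem_erase x K) (h ▸ this)
  have hAxy : G.Adj x y := hK.1 hx hyK hxy
  have hAxz : G.Adj x z := hK.1 hx hzK hxz
  have hAyz : G.Adj y z := hK.1 hyK hzK hyz
  have hux : u ≠ x := fun h => G.irrefl (h ▸ hxu)
  have hvx : v ≠ x := fun h => G.irrefl (h ▸ hxv)
  have huy : u ≠ y := fun h => huK (h ▸ hyK)
  have huz : u ≠ z := fun h => huK (h ▸ hzK)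
  have hvy : v ≠ y := fun h => hvK (h ▸ hyK)
  have hvz : v ≠ z := fun h => hvK (h ▸ hzK)
  -- no K4: helper
  have no4 : ∀ a b c d : V, a ≠ b → a ≠ c → a ≠ d → b ≠ c → b ≠ d → c ≠ d →
      G.Adj a b → G.Adj a c → G.Adj a d → G.Adj b c → G.Adj b d → G.Adj c d → False := by
    intro a b c d hab hac had hbc hbd hcd Aab Aac Aad Abc Abd Acd
    have hcl : G.IsNClique 4 {a, b, c, d} := by
      constructor
      · intro p hp q hq hpq
        simp only [Finset.coe_insert, Set.mem_insert_iff, Finset.coe_singleton,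
          Set.mem_singleton_iff] at hp hq
        rcases hp with rfl | rfl | rfl | rfl <;> rcases hq with rfl | rfl | rfl | rfl <;>
          first
          | exact absurd rfl hpq
          | assumption
          | exact Aab.symm
          | exact Aac.symm
          | exact Aad.symm
          | exact Abc.symm
          | exact Abd.symm
          | exact Acd.symm
      · rw [Finset.card_insert_of_notMem (by simp [hab, hac, had]),
          Finset.card_insert_of_notMem (by simp [hbc, hbd]),
          Finset.card_insert_of_notMem (by simp [hcd]), Finset.card_singleton]
    have hbdd : BddAbove {n | ∃ s : Finset V, G.IsNClique n s} := by
      refine ⟨Fintype.card V, fun n hn => ?_⟩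
      obtain ⟨s, hs⟩ := hn
      exact hs.2 ▸ Finset.card_le_univ s
    have h4 : (4 : ℕ) ≤ cliqueNum' G := le_csSup hbdd ⟨_, hcl⟩
    rw [hw] at h4
    omega
  -- case analysis on adjacency of u, v with y and z
  by_cases huy' : G.Adj u y
  · by_cases hvy' : G.Adj v y
    · exact no4 x u v y hux.symm hvx.symm hxy huv huy hvy
        hxu hxv hAxy huvAdj huy' hvy'
    · -- diamond x v u y : edges xv, xu, vu, xy, uy, non-edge vy
      exact hdia ⟨x, v, u, y, hvx.symm, hux.symm, hxy, (Ne.symm huv), hvy, huy,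
        hxv, hxu, huvAdj.symm, hAxy, huy', hvy'⟩
  · by_cases hvy' : G.Adj v y
    · -- diamond x u v y
      exact hdia ⟨x, u, v, y, hux.symm, hvx.symm, hxy, huv, huy, hvy,
        hxu, hxv, huvAdj, hAxy, hvy', huy'⟩
    · by_cases huz' : G.Adj u z
      · by_cases hvz' : G.Adj v z
        · exact no4 x u v z hux.symm hvx.symm hxz huv huz hvz
            hxu hxv hAxz huvAdj huz' hvz'
        · exact hdia ⟨x, v, u, z, hvx.symm, hux.symm, hxz, (Ne.symm huv), hvz, huz,
            hxv, hxu, huvAdj.symm, hAxz, huz', hvz'⟩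
      · by_cases hvz' : G.Adj v z
        · exact hdia ⟨x, u, v, z, hux.symm, hvx.symm, hxz, huv, huz, hvz,
            hxu, hxv, huvAdj, hAxz, hvz', huz'⟩
        · -- gap: u v y z
          exact hgap ⟨u, v, y, z, huv, huy, huz, hvy, hvz, hyz,
            huvAdj, hAyz, huy', huz', hvy', hvz'⟩
end

section
/- Let G be a gap-free, diamond-free finite simple graph with clique number exactly 3 and no isolated vertices, let K be a dominating triangle of G in which every outside vertex has exactly one neighbor, and let x be a vertex of K. Then the induced subgraph G − st(x) obtained by deleting x and all its neighbors is bipartite. -/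
open SimpleGraph

/-!
Write `K = {x, y, z}` and colour a vertex `w` of `G - st(x)` by whether it is adjacent to `y`.
Since `w` is not adjacent to `x`, its unique neighbour in `K` is `y` or `z`, so each colour class
consists of vertices missing both ends of one edge of `K` (`xz`, resp. `xy`). In a gap-free graph
the common non-neighbourhood of an edge is independent, so the colouring is proper.
-/

section

variable {V : Type*} {G : SimpleGraph V}

-- No distinctness is assumed: edges sharing a vertex satisfy the conclusion trivially.
theorem IsGapFree.adj_of_adj_of_adj (hG : IsGapFree G) {a b c d : V} (hab : G.Adj a b)
    (hcd : G.Adj c d) : G.Adj a c ∨ G.Adj a d ∨ G.Adj b c ∨ G.Adj b d := by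
  by_contra! h
  obtain ⟨hac, had, hbc, hbd⟩ := h
  have hac' : a ≠ c := by rintro rfl; exact had hcd
  have had' : a ≠ d := by rintro rfl; exact hac hcd.symm
  have hbc' : b ≠ c := by rintro rfl; exact hbd hcd
  have hbd' : b ≠ d := by rintro rfl; exact hbc hcd.symm
  exact hG ⟨a, b, c, d, hab.ne, hac', had', hbc', hbd', hcd.ne, hab, hcd, hac, had, hbc, hbd⟩

theorem IsGapFree.not_adj_of_not_adj_edge (hG : IsGapFree G) {x y a b : V} (hxy : G.Adj x y)
    (hax : ¬G.Adj a x) (hay : ¬G.Adj a y) (hbx : ¬G.Adj b x) (hby : ¬G.Adj b y) :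
    ¬G.Adj a b := fun hab => by
  rcases hG.adj_of_adj_of_adj hab hxy with h | h | h | h <;> contradiction

theorem SimpleGraph.IsNClique.exists_eq_triple_of_mem [DecidableEq V] {K : Finset V}
    (hK : G.IsNClique 3 K) {x : V} (hx : x ∈ K) :
    ∃ y z, G.Adj x y ∧ G.Adj x z ∧ G.Adj y z ∧ K = {x, y, z} := by
  obtain ⟨a, b, c, hab, hac, hbc, rfl⟩ := is3Clique_iff.mp hK
  simp only [Finset.mem_insert, Finset.mem_singleton] at hx
  rcases hx with rfl | rfl | rfl
  · exact ⟨b, c, hab, hac, hbc, rfl⟩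
  · exact ⟨a, c, hab.symm, hbc, hac, Finset.insert_comm _ _ _⟩
  · refine ⟨a, b, hac.symm, hbc.symm, hab, ?_⟩
    ext
    simp only [Finset.mem_insert, Finset.mem_singleton]
    tauto

end

theorem stmt_7_general {V : Type*} (G : SimpleGraph V)
    (hgap : IsGapFree G)
    (K : Finset V) (hK : G.IsNClique 3 K)
    (hdom : ∀ v : V, v ∉ K → ∃! u, u ∈ K ∧ G.Adj v u)
    (x : V) (hx : x ∈ K) :
    (G.induce {w : V | w ≠ x ∧ ¬ G.Adj x w}).Colorable 2 := by
  classical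
  obtain ⟨y, z, hxy, hxz, hyz, rfl⟩ := hK.exists_eq_triple_of_mem hx
  have not_adj_z_of_adj_y : ∀ w, w ≠ x → ¬G.Adj x w → G.Adj w y → ¬G.Adj w z := by
    intro w hwx hxw hwy hwz
    have hwK : w ∉ ({x, y, z} : Finset V) := by
      simp only [Finset.mem_insert, Finset.mem_singleton, not_or]
      exact ⟨hwx, by rintro rfl; exact hxw hxy, by rintro rfl; exact hxw hxz⟩
    exact hyz.ne ((hdom w hwK).unique ⟨by simp, hwy⟩ ⟨by simp, hwz⟩)
  refine (Coloring.mk (fun w => decide (G.Adj w.1 y)) ?_).colorable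
  rintro ⟨a, hax, hxa⟩ ⟨b, hbx, hxb⟩ (hab : G.Adj a b) hcol
  have hxa' : ¬G.Adj a x := fun h => hxa h.symm
  have hxb' : ¬G.Adj b x := fun h => hxb h.symm
  by_cases hay : G.Adj a y
  · have hby : G.Adj b y := by simpa [hay] using hcol.symm
    exact hgap.not_adj_of_not_adj_edge hxz hxa' (not_adj_z_of_adj_y a hax hxa hay) hxb'
      (not_adj_z_of_adj_y b hbx hxb hby) hab
  · have hby : ¬G.Adj b y := by simpa [hay] using hcol.symm
    exact hgap.not_adj_of_not_adj_edge hxy hxa' hay hxb' hby hab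

/-- If G is (gap, diamond)-free with clique number exactly 3 and no isolated vertices,
K a dominating triangle whose outside vertices have exactly one neighbor in K, and x ∈ K,
then the induced subgraph on the complement of st(x) is bipartite. -/
theorem stmt_7 {V : Type*} [Fintype V] (G : SimpleGraph V)
    (hgap : IsGapFree G) (hdia : IsDiamondFree G) (hw : cliqueNum' G = 3)
    (hiso : ∀ v : V, ∃ w, G.Adj v w)
    (K : Finset V) (hK : G.IsNClique 3 K)
    (hdom : ∀ v : V, v ∉ K → ∃! u, u ∈ K ∧ G.Adj v u)
    (x : V) (hx : x ∈ K) :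
    (G.induce {w : V | w ≠ x ∧ ¬ G.Adj x w}).Colorable 2 :=
  stmt_7_general G hgap K hK hdom x hx
end

section
/- If G is a gap-free bipartite finite simple graph, then the complement G^c is chordal. -/
open SimpleGraph

/-- If G is gap-free and bipartite, then its complement is chordal. -/
theorem stmt_8 {V : Type*} [Fintype V] (G : SimpleGraph V)
    (hgap : IsGapFree G) (hbip : G.Colorable 2) :
    IsChordal Gᶜ := by
  rintro n hn ⟨f, hinj, hadj⟩
  obtain ⟨c⟩ := hbip
  have key : ∀ i j : Fin n, i ≠ j → ¬ (cycG n).Adj i j → G.Adj (f i) (f j) := by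
    intro i j hij hncyc
    have h1 : ¬ Gᶜ.Adj (f i) (f j) := fun h => hncyc ((hadj i j).mp h)
    rw [compl_adj] at h1
    push_neg at h1
    exact h1 (fun h => hij (hinj h))
  have key2 : ∀ i j : Fin n, (cycG n).Adj i j → ¬ G.Adj (f i) (f j) := by
    intro i j h
    have := (hadj i j).mpr h
    rw [compl_adj] at this
    exact this.2
  rcases Nat.lt_or_ge n 6 with h6 | h6
  · interval_cases n
    · -- n = 4 : gap in G on f 0, f 2, f 1, f 3
      refine hgap ⟨f 0, f 2, f 1, f 3, ?_, ?_, ?_, ?_, ?_, ?_, ?_, ?_, ?_, ?_, ?_, ?_⟩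
      · exact hinj.ne (by decide)
      · exact hinj.ne (by decide)
      · exact hinj.ne (by decide)
      · exact hinj.ne (by decide)
      · exact hinj.ne (by decide)
      · exact hinj.ne (by decide)
      · exact key 0 2 (by decide) (by simp only [cycG, SimpleGraph.fromRel_adj]; decide)
      · exact key 1 3 (by decide) (by simp only [cycG, SimpleGraph.fromRel_adj]; decide)
      · exact key2 0 1 (by simp only [cycG, SimpleGraph.fromRel_adj]; decide)
      · exact key2 0 3 (by simp only [cycG, SimpleGraph.fromRel_adj]; decide)
      · exact key2 2 1 (by simp only [cycG, SimpleGraph.fromRel_adj]; decide)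
      · exact key2 2 3 (by simp only [cycG, SimpleGraph.fromRel_adj]; decide)
    · -- n = 5 : complement of C5 is a 5-cycle (odd), contradicting 2-colorability
      have e1 := key 0 2 (by decide) (by simp only [cycG, SimpleGraph.fromRel_adj]; decide)
      have e2 := key 2 4 (by decide) (by simp only [cycG, SimpleGraph.fromRel_adj]; decide)
      have e3 := key 4 1 (by decide) (by simp only [cycG, SimpleGraph.fromRel_adj]; decide)
      have e4 := key 1 3 (by decide) (by simp only [cycG, SimpleGraph.fromRel_adj]; decide)
      have e5 := key 3 0 (by decide) (by simp only [cycG, SimpleGraph.fromRel_adj]; decide)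
      have c1 := c.valid e1
      have c2 := c.valid e2
      have c3 := c.valid e3
      have c4 := c.valid e4
      have c5 := c.valid e5
      have h0 := (c (f 0)).isLt
      have h1 := (c (f 1)).isLt
      have h2 := (c (f 2)).isLt
      have h3 := (c (f 3)).isLt
      have h4 := (c (f 4)).isLt
      rw [Fin.ne_iff_vne] at c1 c2 c3 c4 c5
      omega
  · -- n ≥ 6 : a triangle in G on f 0, f 2, f 4
    have m1 : (1 : ℕ) % n = 1 := Nat.mod_eq_of_lt (by omega)
    have m3 : (3 : ℕ) % n = 3 := Nat.mod_eq_of_lt (by omega)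
    have m5 : (5 : ℕ) % n = 5 := Nat.mod_eq_of_lt (by omega)
    have i0 : Fin n := ⟨0, by omega⟩
    have nonadj : ∀ a b : ℕ, ∀ ha : a < n, ∀ hb : b < n, a + 1 < n → b + 1 < n →
        b ≠ a + 1 → a ≠ b + 1 → ¬ (cycG n).Adj ⟨a, ha⟩ ⟨b, hb⟩ := by
      intro a b ha hb ha1 hb1 h1 h2
      rintro ⟨-, h | h⟩
      · rw [Nat.mod_eq_of_lt ha1] at h; exact h1 h
      · rw [Nat.mod_eq_of_lt hb1] at h; exact h2 h
    have e1 : G.Adj (f ⟨0, by omega⟩) (f ⟨2, by omega⟩) :=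
      key _ _ (Fin.ne_of_val_ne (show (0:ℕ) ≠ 2 by omega))
        (nonadj 0 2 (by omega) (by omega) (by omega) (by omega) (by omega) (by omega))
    have e2 : G.Adj (f ⟨2, by omega⟩) (f ⟨4, by omega⟩) :=
      key _ _ (Fin.ne_of_val_ne (show (2:ℕ) ≠ 4 by omega))
        (nonadj 2 4 (by omega) (by omega) (by omega) (by omega) (by omega) (by omega))
    have e3 : G.Adj (f ⟨0, by omega⟩) (f ⟨4, by omega⟩) :=
      key _ _ (Fin.ne_of_val_ne (show (0:ℕ) ≠ 4 by omega))
        (nonadj 0 4 (by omega) (by omega) (by omega) (by omega) (by omega) (by omega))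
    have c1 := c.valid e1
    have c2 := c.valid e2
    have c3 := c.valid e3
    have h0 := (c (f ⟨0, by omega⟩)).isLt
    have h2 := (c (f ⟨2, by omega⟩)).isLt
    have h4 := (c (f ⟨4, by omega⟩)).isLt
    rw [Fin.ne_iff_vne] at c1 c2 c3
    omega
end

section
/- Let G be a connected, gap-free, C_5-free, diamond-free finite simple graph with clique number ω(G) = 3. Then either G is isomorphic to the complement of the 6-cycle, or the complement G^c is chordal. -/
open SimpleGraph

/-!
If `Gᶜ` is not chordal it has an induced cycle `Cₙ`, `n ≥ 4`, so `G` contains an induced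
`Cₙᶜ`. For `n = 4` this is a gap, for `n = 5` an induced `C₅` (`C₅` is self-complementary),
for `n = 7` a diamond, and for `n ≥ 8` the vertices `0, 2, 4, 6` form a `K₄`.

For `n = 6`, `G` contains the prism `C₆ᶜ` (triangles `0 2 4` and `1 3 5`), and no vertex `v`
outside it has a neighbour on it. By gap-freeness a neighbour `i` forces a neighbour `i ± 1`;
two neighbours in one triangle give a diamond or a `K₄`; so, up to rotation, `v` sees `0` and
`1` but not `2` and `5`, and then `v 0 2 5 1` is an induced `C₅`. As `G` is connected, it is
the prism.
-/

instance {n : ℕ} : DecidableRel (cycG n).Adj := fun _ _ =>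
  decidable_of_iff' _ (fromRel_adj _ _ _)

lemma cycG_adj_iff {n : ℕ} [NeZero n] {i j : Fin n} :
    (cycG n).Adj i j ↔ i ≠ j ∧ (j = i + 1 ∨ i = j + 1) := by
  simp [cycG, fromRel_adj, Fin.ext_iff, Fin.val_add]

def cycG.rotate {n : ℕ} [NeZero n] (k : Fin n) : cycG n ≃g cycG n where
  toEquiv := Equiv.addRight k
  map_rel_iff' := by
    intro i j
    simp only [Equiv.coe_addRight, cycG_adj_iff, ne_eq, add_left_inj, add_right_comm _ k 1]

section

variable {V W : Type*} {G : SimpleGraph V} {H : SimpleGraph W}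

lemma cliqueFree_of_cliqueNum'_lt {n : ℕ} (h0 : 0 < cliqueNum' G) (hn : cliqueNum' G < n) :
    G.CliqueFree n := by
  intro s hs
  have hbdd : BddAbove {n | ∃ s : Finset V, G.IsNClique n s} := by
    by_contra h
    simp [cliqueNum', csSup_of_not_bddAbove h] at h0
  exact (le_csSup hbdd ⟨s, hs⟩).not_gt hn

lemma IsDiamondFree.not_adj_of_adj_of_triangle (hD : IsDiamondFree G) (hK : G.CliqueFree 4)
    {v x y z : V} (hxy : G.Adj x y) (hxz : G.Adj x z) (hyz : G.Adj y z) (hvz : v ≠ z)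
    (hvx : G.Adj v x) : ¬ G.Adj v y := by
  classical
  intro hvy
  by_cases hvz' : G.Adj v z
  · exact hK (insert v {x, y, z})
      ((is3Clique_triple_iff.2 ⟨hxy, hxz, hyz⟩).insert (by simp [hvx, hvy, hvz']))
  · exact hD ⟨x, v, y, z, hvx.ne', hxy.ne, hxz.ne, hvy.ne, hvz, hyz.ne,
      hvx.symm, hxy, hvy, hxz, hyz, hvz'⟩

lemma IsGapFree.comap (hG : IsGapFree G) (e : H ↪g G) : IsGapFree H := by
  rintro ⟨a, b, c, d, h⟩
  exact hG ⟨e a, e b, e c, e d, by simpa [e.injective.ne_iff] using h⟩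

lemma IsDiamondFree.comap (hG : IsDiamondFree G) (e : H ↪g G) : IsDiamondFree H := by
  rintro ⟨a, b, c, d, h⟩
  exact hG ⟨e a, e b, e c, e d, by simpa [e.injective.ne_iff] using h⟩

lemma HasInducedCycle.map {n : ℕ} (h : HasInducedCycle H n) (e : H ↪g G) :
    HasInducedCycle G n := by
  obtain ⟨f, hf, hadj⟩ := h
  exact ⟨e ∘ f, e.injective.comp hf, fun i j => by simp [hadj]⟩

lemma HasInducedCycle.nonempty_compl_embedding {n : ℕ} (h : HasInducedCycle Gᶜ n) :
    Nonempty ((cycG n)ᶜ ↪g G) := by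
  obtain ⟨f, hf, hadj⟩ := h
  refine ⟨⟨⟨f, hf⟩, fun {i j} => ?_⟩⟩
  obtain rfl | hij := eq_or_ne i j
  · simp
  · have := hadj i j
    simp only [compl_adj, ne_eq, hf.ne hij, hij, not_false_eq_true, true_and] at this ⊢
    tauto

lemma not_isGapFree_compl_cycG_four : ¬ IsGapFree (cycG 4)ᶜ :=
  fun h => h ⟨0, 2, 1, 3, by decide⟩

lemma hasInducedCycle_compl_cycG_five : HasInducedCycle (cycG 5)ᶜ 5 :=
  ⟨fun i => 2 * i, by decide, by decide⟩

lemma not_isDiamondFree_compl_cycG_seven : ¬ IsDiamondFree (cycG 7)ᶜ :=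
  fun h => h ⟨0, 2, 5, 3, by decide⟩

lemma not_cliqueFree_four_compl_cycG {n : ℕ} (hn : 8 ≤ n) : ¬ (cycG n)ᶜ.CliqueFree 4 := by
  refine IsContained.not_cliqueFree
    ⟨⟨⟨fun k => ⟨2 * k, by omega⟩, fun {k l} hkl => ?_⟩, ?_⟩⟩
  · simp only [top_adj, ne_eq, Fin.ext_iff] at hkl
    simp only [compl_adj, cycG, fromRel_adj, ne_eq, Fin.ext_iff]
    rw [Nat.mod_eq_of_lt (by omega), Nat.mod_eq_of_lt (by omega)]
    omega
  · intro k l hkl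
    simp only [RelHom.coeFn_mk, Fin.ext_iff] at hkl ⊢
    omega

namespace ComplCycGSix

variable (e : (cycG 6)ᶜ ↪g G) {v : V}

lemma adj_one_or_adj_five (hG : IsGapFree G) (hv : v ∉ Set.range e)
    (h0 : G.Adj v (e 0)) : G.Adj v (e 1) ∨ G.Adj v (e 5) := by
  by_contra! h
  have hne : ∀ i, v ≠ e i := fun i h => hv ⟨i, h.symm⟩
  exact hG ⟨v, e 0, e 1, e 5, by simp [hne, e.injective.ne_iff, h0, h.1, h.2]; decide⟩

lemma hasInducedCycle_five_of_adj_zero_one (hv : v ∉ Set.range e)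
    (h0 : G.Adj v (e 0)) (h1 : G.Adj v (e 1)) (h2 : ¬ G.Adj v (e 2)) (h5 : ¬ G.Adj v (e 5)) :
    HasInducedCycle G 5 := by
  have hne : ∀ i, e i ≠ v := fun i h => hv ⟨i, h⟩
  refine ⟨![v, e 0, e 2, e 5, e 1], ?_, ?_⟩
  · intro x y
    fin_cases x <;> fin_cases y <;> simp [hne, Ne.symm (hne _), e.injective.eq_iff]
  · intro x y
    fin_cases x <;> fin_cases y <;>
      simp [h0, h1, h2, h5, G.adj_comm _ v] <;> decide

lemma not_adj_one_of_adj_zero (hC5 : ¬ HasInducedCycle G 5) (hD : IsDiamondFree G)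
    (hK : G.CliqueFree 4) (hv : v ∉ Set.range e) (h0 : G.Adj v (e 0)) : ¬ G.Adj v (e 1) := by
  intro h1
  have hne : ∀ i, v ≠ e i := fun i h => hv ⟨i, h.symm⟩
  have h2 : ¬ G.Adj v (e 2) := hD.not_adj_of_adj_of_triangle hK (z := e 4)
    (e.map_adj_iff.2 (by decide)) (e.map_adj_iff.2 (by decide)) (e.map_adj_iff.2 (by decide))
    (hne 4) h0
  have h5 : ¬ G.Adj v (e 5) := hD.not_adj_of_adj_of_triangle hK (z := e 3)
    (e.map_adj_iff.2 (by decide)) (e.map_adj_iff.2 (by decide)) (e.map_adj_iff.2 (by decide))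
    (hne 3) h1
  exact hC5 (hasInducedCycle_five_of_adj_zero_one e hv h0 h1 h2 h5)

lemma not_adj_of_notMem_range (hgap : IsGapFree G) (hC5 : ¬ HasInducedCycle G 5)
    (hD : IsDiamondFree G) (hK : G.CliqueFree 4) (hv : v ∉ Set.range e) (i : Fin 6) :
    ¬ G.Adj v (e i) := by
  let rot (e : (cycG 6)ᶜ ↪g G) (k : Fin 6) : (cycG 6)ᶜ ↪g G :=
    e.comp (Embedding.complEquiv (cycG.rotate k).toEmbedding)
  have hrot : ∀ (e : (cycG 6)ᶜ ↪g G) k, v ∉ Set.range e → v ∉ Set.range (rot e k) :=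
    fun _ _ hv ⟨_, hj⟩ => hv ⟨_, hj⟩
  intro hi
  have h0 : G.Adj v (rot e i 0) := by
    change G.Adj v (e (0 + i))
    rwa [zero_add]
  rcases adj_one_or_adj_five _ hgap (hrot e i hv) h0 with h1 | h5
  · exact not_adj_one_of_adj_zero _ hC5 hD hK (hrot e i hv) h0 h1
  · exact not_adj_one_of_adj_zero (rot (rot e i) 5) hC5 hD hK (hrot _ 5 (hrot e i hv)) h5 h0

lemma nonempty_iso_of_connected (e : (cycG 6)ᶜ ↪g G) (hconn : G.Connected)
    (hgap : IsGapFree G) (hC5 : ¬ HasInducedCycle G 5) (hD : IsDiamondFree G)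
    (hK : G.CliqueFree 4) : Nonempty (G ≃g (cycG 6)ᶜ) := by
  have hsurj : Function.Surjective e := by
    intro x
    by_contra hx
    obtain ⟨p⟩ := hconn.preconnected (e 0) x
    obtain ⟨d, -, ⟨i, hi⟩, hd⟩ := p.exists_boundary_dart (Set.range e) ⟨0, rfl⟩ hx
    exact not_adj_of_notMem_range e hgap hC5 hD hK hd i (hi ▸ d.adj.symm)
  exact ⟨(RelIso.ofSurjective e hsurj).symm⟩

end ComplCycGSix

end

theorem stmt_9_general {V : Type*} (G : SimpleGraph V)
    (hconn : G.Connected) (hgap : IsGapFree G) (hC5 : ¬ HasInducedCycle G 5)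
    (hdia : IsDiamondFree G) (hw : cliqueNum' G = 3) :
    Nonempty (G ≃g (cycG 6)ᶜ) ∨ IsChordal Gᶜ := by
  have hK4 : G.CliqueFree 4 := cliqueFree_of_cliqueNum'_lt (by omega) (by omega)
  refine or_iff_not_imp_right.2 fun hch => ?_
  obtain ⟨n, hn, hcyc⟩ : ∃ n, 4 ≤ n ∧ HasInducedCycle Gᶜ n := by
    simpa [IsChordal] using hch
  obtain ⟨e⟩ := hcyc.nonempty_compl_embedding
  obtain rfl | rfl | rfl | rfl | hn : n = 4 ∨ n = 5 ∨ n = 6 ∨ n = 7 ∨ 8 ≤ n := by omega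
  · exact absurd (hgap.comap e) not_isGapFree_compl_cycG_four
  · exact absurd (hasInducedCycle_compl_cycG_five.map e) hC5
  · exact ComplCycGSix.nonempty_iso_of_connected e hconn hgap hC5 hdia hK4
  · exact absurd (hdia.comap e) not_isDiamondFree_compl_cycG_seven
  · exact absurd (hK4.comap ⟨e.toCopy⟩) (not_cliqueFree_four_compl_cycG hn)

/-- If G is connected, gap-free, C5-free and diamond-free with clique number 3, then
either G is isomorphic to the complement of the 6-cycle or the complement of G is chordal. -/
theorem stmt_9 {V : Type*} [Fintype V] (G : SimpleGraph V)
    (hconn : G.Connected) (hgap : IsGapFree G) (hC5 : ¬ HasInducedCycle G 5)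
    (hdia : IsDiamondFree G) (hw : cliqueNum' G = 3) :
    Nonempty (G ≃g (cycG 6)ᶜ) ∨ IsChordal Gᶜ :=
  stmt_9_general G hconn hgap hC5 hdia hw
end

section
/- Let G be a gap-free, diamond-free finite simple graph with no isolated vertices that is triangle-free and not bipartite. Then G can be obtained from a 5-cycle by vertex multiplication; in particular, G contains an induced 5-cycle and every vertex of G lies on an induced 5-cycle. -/
open SimpleGraph

/-! ### Auxiliary development -/

/-- A closed walk of length `n`, encoded as a function. -/
def CWalk {V : Type*} (G : SimpleGraph V) (n : ℕ) : Prop :=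
  ∃ c : ℕ → V, c n = c 0 ∧ ∀ i < n, G.Adj (c i) (c (i + 1))

lemma cwalk_of_walk {V : Type*} {G : SimpleGraph V} {u : V} (p : G.Walk u u) :
    CWalk G p.length := by
  refine ⟨fun k => p.getVert k, ?_, fun i hi => p.adj_getVert_succ hi⟩
  simp [SimpleGraph.Walk.getVert_length, SimpleGraph.Walk.getVert_zero]

/-- If `G` is not 2-colorable, it has an odd closed walk. -/
lemma exists_odd_cwalk {V : Type*} {G : SimpleGraph V} (hnb : ¬ G.Colorable 2) :
    ∃ n, Odd n ∧ CWalk G n := by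
  by_contra hno
  push_neg at hno
  apply hnb
  classical
  have hreach : ∀ v : V, G.Reachable ((G.connectedComponentMk v).out) v := by
    intro v
    apply SimpleGraph.ConnectedComponent.exact
    exact (G.connectedComponentMk v).out_eq
  let W : (v : V) → G.Walk ((G.connectedComponentMk v).out) v := fun v => (hreach v).some
  refine ⟨SimpleGraph.Coloring.mk (fun v => ⟨(W v).length % 2, by omega⟩) ?_⟩
  intro v w hadj
  have hcomp : G.connectedComponentMk v = G.connectedComponentMk w :=
    SimpleGraph.ConnectedComponent.sound hadj.reachable
  intro hpar
  have hout : (G.connectedComponentMk w).out = (G.connectedComponentMk v).out := by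
    rw [hcomp]
  let q : G.Walk ((G.connectedComponentMk v).out) ((G.connectedComponentMk v).out) :=
    (W v).append (SimpleGraph.Walk.cons hadj ((W w).reverse.copy rfl hout))
  have hlen : q.length = (W v).length + (1 + (W w).length) := by
    simp [q, SimpleGraph.Walk.length_append, SimpleGraph.Walk.length_cons,
      SimpleGraph.Walk.length_copy, SimpleGraph.Walk.length_reverse]
    omega
  simp only [Fin.mk.injEq] at hpar
  exact hno q.length (by rw [Nat.odd_iff, hlen]; omega) (cwalk_of_walk q)


lemma cw_split {V : Type*} {G : SimpleGraph V} {c : ℕ → V} {n i j : ℕ}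
    (h0 : c n = c 0) (hadj : ∀ k < n, G.Adj (c k) (c (k + 1)))
    (hij : i < j) (hjn : j ≤ n) (hcc : c i = c j) :
    CWalk G (j - i) ∧ CWalk G (n - (j - i)) := by
  constructor
  · refine ⟨fun k => c (i + k), ?_, fun k hk => ?_⟩
    · dsimp only
      rw [show i + (j - i) = j by omega, show i + 0 = i by omega]
      exact hcc.symm
    · dsimp only
      rw [show i + (k + 1) = (i + k) + 1 by omega]
      exact hadj (i + k) (by omega)
  · refine ⟨fun k => if k ≤ i then c k else c (k + (j - i)), ?_, fun k hk => ?_⟩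
    · dsimp only
      rw [if_pos (Nat.zero_le i)]
      by_cases h1 : n - (j - i) ≤ i
      · rw [if_pos h1, show n - (j - i) = i by omega]
        have hnj : n = j := by omega
        rw [hcc, ← hnj, h0]
      · rw [if_neg h1, show n - (j - i) + (j - i) = n by omega, h0]
    · dsimp only
      split_ifs with h1 h2 h2
      · exact hadj k (by omega)
      · rw [show k + 1 + (j - i) = j + 1 by omega, show k = i by omega, hcc]
        exact hadj j (by omega)
      · exact (h1 (by omega)).elim
      · rw [show k + 1 + (j - i) = (k + (j - i)) + 1 by omega]
        exact hadj (k + (j - i)) (by omega)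

lemma cw_chord {V : Type*} {G : SimpleGraph V} {c : ℕ → V} {n i j : ℕ}
    (h0 : c n = c 0) (hadj : ∀ k < n, G.Adj (c k) (c (k + 1)))
    (hc : G.Adj (c i) (c j)) (hij : i < j) (hjn : j ≤ n) :
    CWalk G (j - i + 1) ∧ CWalk G (n - (j - i) + 1) := by
  constructor
  · refine ⟨fun k => if k ≤ j - i then c (i + k) else c i, ?_, fun k hk => ?_⟩
    · dsimp only
      rw [if_neg (by omega), if_pos (Nat.zero_le _), show i + 0 = i by omega]
    · dsimp only
      split_ifs with h1 h2 h2
      · rw [show i + (k + 1) = (i + k) + 1 by omega]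
        exact hadj (i + k) (by omega)
      · rw [show i + k = j by omega]
        exact hc.symm
      · exact (h1 (by omega)).elim
      · exact (h1 (by omega)).elim
  · refine ⟨fun k => if k ≤ i then c k else c (k + (j - i) - 1), ?_, fun k hk => ?_⟩
    · dsimp only
      rw [if_pos (Nat.zero_le _), if_neg (by omega),
        show n - (j - i) + 1 + (j - i) - 1 = n by omega, h0]
    · dsimp only
      split_ifs with h1 h2 h2
      · exact hadj k (by omega)
      · rw [show k + 1 + (j - i) - 1 = j by omega, show k = i by omega]
        exact hc
      · exact (h1 (by omega)).elim
      · rw [show k + 1 + (j - i) - 1 = (k + (j - i) - 1) + 1 by omega]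
        exact hadj (k + (j - i) - 1) (by omega)


/-- Adjacency pattern of a vertex at "position `p`" around the pentagon `e`. -/
def Spec {V : Type*} (G : SimpleGraph V) (e : ℕ → V) (v : V) (p : ℕ) : Prop :=
  G.Adj v (e (p + 1)) ∧ G.Adj v (e (p + 4)) ∧
    ¬G.Adj v (e p) ∧ ¬G.Adj v (e (p + 2)) ∧ ¬G.Adj v (e (p + 3))

structure CycSetup {V : Type*} (G : SimpleGraph V) (e : ℕ → V) : Prop where
  cong : ∀ a b, a % 5 = b % 5 → e a = e b
  adj : ∀ k, G.Adj (e k) (e (k + 1))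
  nd2 : ∀ k, ¬G.Adj (e k) (e (k + 2))
  inj : ∀ a b, a % 5 ≠ b % 5 → e a ≠ e b
  tri : ∀ a b x : V, G.Adj a b → G.Adj a x → G.Adj b x → False
  gap : ∀ a b c d : V, a ≠ b → a ≠ c → a ≠ d → b ≠ c → b ≠ d → c ≠ d →
    G.Adj a b → G.Adj c d → ¬G.Adj a c → ¬G.Adj a d → ¬G.Adj b c → ¬G.Adj b d → False

namespace CycSetup

variable {V : Type*} {G : SimpleGraph V} {e : ℕ → V} (h : CycSetup G e)

include h

lemma adj' (a b : ℕ) (hb : b % 5 = (a + 1) % 5) : G.Adj (e a) (e b) := by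
  have := h.adj a
  rwa [h.cong (a + 1) b (by omega)] at this

lemma nd2' (a b : ℕ) (hb : b % 5 = (a + 2) % 5) : ¬G.Adj (e a) (e b) := by
  have := h.nd2 a
  rwa [h.cong (a + 2) b (by omega)] at this

lemma nd3' (a b : ℕ) (hb : b % 5 = (a + 3) % 5) : ¬G.Adj (e a) (e b) :=
  fun hadj => h.nd2' b a (by omega) hadj.symm

lemma spec_e (m : ℕ) : Spec G e (e m) m :=
  ⟨h.adj m, (h.adj' (m + 4) m (by omega)).symm,
   fun hh => (G.ne_of_adj hh) rfl, h.nd2 m, h.nd3' m (m + 3) (by omega)⟩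

lemma spec_cong {v : V} {p q : ℕ} (hpq : p % 5 = q % 5) (hs : Spec G e v p) :
    Spec G e v q := by
  obtain ⟨a1, a2, a3, a4, a5⟩ := hs
  exact ⟨by rw [h.cong (q + 1) (p + 1) (by omega)]; exact a1,
    by rw [h.cong (q + 4) (p + 4) (by omega)]; exact a2,
    by rw [h.cong q p (by omega)]; exact a3,
    by rw [h.cong (q + 2) (p + 2) (by omega)]; exact a4,
    by rw [h.cong (q + 3) (p + 3) (by omega)]; exact a5⟩

lemma spec_unique {v : V} {p q : ℕ} (hp : Spec G e v p) (hq : Spec G e v q) :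
    p % 5 = q % 5 := by
  by_contra hne
  have hcases : (p + 1) % 5 = q % 5 ∨ (p + 1) % 5 = (q + 2) % 5 ∨
      (p + 1) % 5 = (q + 3) % 5 ∨ (p + 1) % 5 = (q + 4) % 5 := by omega
  rcases hcases with h1 | h1 | h1 | h1
  · exact hq.2.2.1 (by rw [← h.cong (p + 1) q h1]; exact hp.1)
  · exact hq.2.2.2.1 (by rw [← h.cong (p + 1) (q + 2) h1]; exact hp.1)
  · exact hq.2.2.2.2 (by rw [← h.cong (p + 1) (q + 3) h1]; exact hp.1)
  · exact hq.2.2.2.1 (by rw [← h.cong (p + 4) (q + 2) (by omega)]; exact hp.2.1)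

lemma adj_of_succ {v w : V} {p q : ℕ} (hv : Spec G e v p) (hw : Spec G e w q)
    (hpq : q % 5 = (p + 1) % 5) : G.Adj v w := by
  by_contra hvw
  have hwp4 : ¬G.Adj w (e (p + 4)) := fun hh =>
    hw.2.2.2.2 (by rw [h.cong (q + 3) (p + 4) (by omega)]; exact hh)
  refine h.gap v (e (p + 4)) w (e (q + 1)) hv.2.1.ne ?_ ?_ ?_
    (h.inj _ _ (by omega)) hw.1.ne hv.2.1 hw.1 hvw ?_
    (fun hh => hwp4 hh.symm) ?_
  · intro hh; subst hh
    have := h.spec_unique hv hw; omega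
  · intro hh
    exact hvw (by rw [hh]; exact hw.1.symm)
  · intro hh
    have hsw : Spec G e w (p + 4) := hh ▸ h.spec_e (p + 4)
    have := h.spec_unique hsw hw; omega
  · rw [h.cong (q + 1) (p + 2) (by omega)]; exact hv.2.2.2.1
  · intro hh
    exact h.nd2' (p + 2) (p + 4) (by omega)
      (by rw [← h.cong (q + 1) (p + 2) (by omega)]; exact hh.symm)

lemma spec_adj_iff {v w : V} {p q : ℕ} (hv : Spec G e v p) (hw : Spec G e w q) :
    (G.Adj v w ↔ (q % 5 = (p + 1) % 5 ∨ p % 5 = (q + 1) % 5)) := by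
  constructor
  · intro hvw
    have hcases : q % 5 = p % 5 ∨ q % 5 = (p + 1) % 5 ∨ q % 5 = (p + 2) % 5 ∨
        q % 5 = (p + 3) % 5 ∨ q % 5 = (p + 4) % 5 := by omega
    rcases hcases with h1 | h1 | h1 | h1 | h1
    · exact (h.tri v w (e (p + 1)) hvw hv.1
        (by rw [← h.cong (q + 1) (p + 1) (by omega)]; exact hw.1)).elim
    · exact Or.inl h1
    · exact (h.tri v w (e (p + 1)) hvw hv.1
        (by rw [← h.cong (q + 4) (p + 1) (by omega)]; exact hw.2.1)).elim
    · exact (h.tri v w (e (p + 4)) hvw hv.2.1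
        (by rw [← h.cong (q + 1) (p + 4) (by omega)]; exact hw.1)).elim
    · exact Or.inr (by omega)
  · rintro (h1 | h1)
    · exact h.adj_of_succ hv hw h1
    · exact (h.adj_of_succ hw hv h1).symm

lemma spec_exists (hiso : ∀ v : V, ∃ w, G.Adj v w) (v : V) :
    ∃ p, Spec G e v p := by
  classical
  have step1 : ∃ k, G.Adj v (e k) := by
    by_contra hno; push_neg at hno
    obtain ⟨w, hvw⟩ := hiso v
    have hvne : ∀ t, v ≠ e t := fun t hh => hno (t + 1) (by rw [hh]; exact h.adj t)
    by_cases hw0 : ∃ k, G.Adj w (e k)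
    · obtain ⟨k, hwk⟩ := hw0
      have hw1 : ¬G.Adj w (e (k + 1)) := fun hh => h.tri w (e k) (e (k + 1)) hwk hh (h.adj k)
      by_cases hw2 : G.Adj w (e (k + 2))
      · have hw3 : ¬G.Adj w (e (k + 3)) := fun hh =>
          h.tri w (e (k + 2)) (e (k + 3)) hw2 hh (h.adj' (k + 2) (k + 3) (by omega))
        have hw4 : ¬G.Adj w (e (k + 4)) := fun hh =>
          h.tri w (e (k + 4)) (e k) hh hwk (h.adj' (k + 4) k (by omega))
        exact h.gap v w (e (k + 3)) (e (k + 4)) hvw.ne (hvne _) (hvne _)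
          (fun hh => hw4 (by rw [hh]; exact h.adj' (k + 3) (k + 4) (by omega)))
          (fun hh => hw3 (by rw [hh]; exact (h.adj' (k + 3) (k + 4) (by omega)).symm))
          (h.inj _ _ (by omega)) hvw (h.adj' (k + 3) (k + 4) (by omega))
          (hno _) (hno _) hw3 hw4
      · exact h.gap v w (e (k + 1)) (e (k + 2)) hvw.ne (hvne _) (hvne _)
          (fun hh => hw2 (by rw [hh]; exact h.adj' (k + 1) (k + 2) (by omega)))
          (fun hh => hw1 (by rw [hh]; exact (h.adj' (k + 1) (k + 2) (by omega)).symm))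
          (h.inj _ _ (by omega)) hvw (h.adj' (k + 1) (k + 2) (by omega))
          (hno _) (hno _) hw1 hw2
    · push_neg at hw0
      exact h.gap v w (e 0) (e 1) hvw.ne (hvne 0) (hvne 1)
        (fun hh => hw0 1 (by rw [hh]; exact h.adj' 0 1 (by omega)))
        (fun hh => hw0 0 (by rw [hh]; exact (h.adj' 0 1 (by omega)).symm))
        (h.inj 0 1 (by omega)) hvw (h.adj' 0 1 (by omega))
        (hno 0) (hno 1) (hw0 0) (hw0 1)
  obtain ⟨k, hk⟩ := step1
  have h1 : ¬G.Adj v (e (k + 1)) := fun hh => h.tri v (e k) (e (k + 1)) hk hh (h.adj k)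
  have h4 : ¬G.Adj v (e (k + 4)) := fun hh =>
    h.tri v (e (k + 4)) (e k) hh hk (h.adj' (k + 4) k (by omega))
  by_cases h2 : G.Adj v (e (k + 2))
  · refine ⟨k + 1, ?_, ?_, h1, ?_, ?_⟩
    · rw [h.cong (k + 1 + 1) (k + 2) (by omega)]; exact h2
    · rw [h.cong (k + 1 + 4) k (by omega)]; exact hk
    · rw [h.cong (k + 1 + 2) (k + 3) (by omega)]
      exact fun hh => h.tri v (e (k + 2)) (e (k + 3)) h2 hh (h.adj' (k + 2) (k + 3) (by omega))
    · rw [h.cong (k + 1 + 3) (k + 4) (by omega)]; exact h4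
  · by_cases h3 : G.Adj v (e (k + 3))
    · refine ⟨k + 4, ?_, ?_, h4, ?_, ?_⟩
      · rw [h.cong (k + 4 + 1) k (by omega)]; exact hk
      · rw [h.cong (k + 4 + 4) (k + 3) (by omega)]; exact h3
      · rw [h.cong (k + 4 + 2) (k + 1) (by omega)]; exact h1
      · rw [h.cong (k + 4 + 3) (k + 2) (by omega)]; exact h2
    · exact (h.gap v (e k) (e (k + 2)) (e (k + 3)) hk.ne
        (fun hh => h3 (by rw [hh]; exact h.adj' (k + 2) (k + 3) (by omega)))
        (fun hh => h4 (by rw [hh]; exact h.adj' (k + 3) (k + 4) (by omega)))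
        (h.inj _ _ (by omega)) (h.inj _ _ (by omega)) (h.inj _ _ (by omega))
        hk (h.adj' (k + 2) (k + 3) (by omega)) h2 h3 (h.nd2 k)
        (h.nd3' k (k + 3) (by omega))).elim

end CycSetup

lemma cyc5_adj (a b : Fin 5) :
    (cycG 5).Adj a b ↔ ((b : ℕ) = ((a : ℕ) + 1) % 5 ∨ (a : ℕ) = ((b : ℕ) + 1) % 5) := by
  have ha := a.isLt
  have hb := b.isLt
  simp only [cycG, SimpleGraph.fromRel_adj, ne_eq, Fin.ext_iff]
  omega

/-- A gap-free, diamond-free, triangle-free, non-bipartite graph with no isolated vertices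
is obtained from a 5-cycle by vertex multiplication; in particular it contains an induced
5-cycle and every vertex lies on an induced 5-cycle. -/
theorem stmt_13 {V : Type*} [Fintype V] (G : SimpleGraph V)
    (hgap : IsGapFree G) (hdia : IsDiamondFree G)
    (hiso : ∀ v : V, ∃ w, G.Adj v w) (htri : G.CliqueFree 3)
    (hnb : ¬ G.Colorable 2) :
    (∃ f : V → Fin 5, Function.Surjective f ∧
        ∀ x y : V, G.Adj x y ↔ (cycG 5).Adj (f x) (f y)) ∧
    HasInducedCycle G 5 ∧
    ∀ v : V, ∃ c : Fin 5 → V, Function.Injective c ∧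
      (∀ i j, G.Adj (c i) (c j) ↔ (cycG 5).Adj i j) ∧ ∃ i, c i = v := by
  classical
  have hP : ∃ n, Odd n ∧ CWalk G n := exists_odd_cwalk hnb
  obtain ⟨hodd, c, h0, hadjc⟩ := Nat.find_spec hP
  set n := Nat.find hP with hn
  have hmin : ∀ m, m < n → ¬(Odd m ∧ CWalk G m) := fun m hm => Nat.find_min hP hm
  have hodd' : n % 2 = 1 := Nat.odd_iff.mp hodd
  have hn1 : n ≠ 1 := by
    intro h
    have hx := hadjc 0 (by omega)
    rw [h] at h0
    rw [show (0 : ℕ) + 1 = 1 from rfl, h0] at hx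
    exact (G.ne_of_adj hx) rfl
  have hn3 : n ≠ 3 := by
    intro h
    rw [h] at h0
    have a01 := hadjc 0 (by omega)
    have a12 := hadjc 1 (by omega)
    have a23 := hadjc 2 (by omega)
    rw [show (2 : ℕ) + 1 = 3 from rfl, h0] at a23
    exact htri _ (SimpleGraph.is3Clique_triple_iff.mpr ⟨a01, a23.symm, a12⟩)
  have hn5 : 5 ≤ n := by omega
  have cinj : ∀ i j, i < j → j ≤ n → ¬(i = 0 ∧ j = n) → c i ≠ c j := by
    intro i j hij hjn hne hcc
    obtain ⟨w1, w2⟩ := cw_split h0 hadjc hij hjn hcc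
    rcases Nat.even_or_odd (j - i) with hpar | hpar
    · have hp2 := Nat.even_iff.mp hpar
      exact hmin (n - (j - i)) (by omega) ⟨Nat.odd_iff.mpr (by omega), w2⟩
    · exact hmin (j - i) (by omega) ⟨hpar, w1⟩
  have cNoChord : ∀ i j, i < j → j ≤ n → 2 ≤ j - i → j - i ≤ n - 2 → ¬G.Adj (c i) (c j) := by
    intro i j hij hjn hd1 hd2 hadj2
    obtain ⟨w1, w2⟩ := cw_chord h0 hadjc hadj2 hij hjn
    rcases Nat.even_or_odd (j - i) with hpar | hpar
    · have hp2 := Nat.even_iff.mp hpar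
      exact hmin (j - i + 1) (by omega) ⟨Nat.odd_iff.mpr (by omega), w1⟩
    · have hp2 := Nat.odd_iff.mp hpar
      exact hmin (n - (j - i) + 1) (by omega) ⟨Nat.odd_iff.mpr (by omega), w2⟩
  have hn7 : n = 5 := by
    by_contra hne5
    have hge : 7 ≤ n := by omega
    exact hgap ⟨c 0, c 1, c 3, c 4,
      cinj 0 1 (by omega) (by omega) (by omega),
      cinj 0 3 (by omega) (by omega) (by omega),
      cinj 0 4 (by omega) (by omega) (by omega),
      cinj 1 3 (by omega) (by omega) (by omega),
      cinj 1 4 (by omega) (by omega) (by omega),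
      cinj 3 4 (by omega) (by omega) (by omega),
      hadjc 0 (by omega), hadjc 3 (by omega),
      cNoChord 0 3 (by omega) (by omega) (by omega) (by omega),
      cNoChord 0 4 (by omega) (by omega) (by omega) (by omega),
      cNoChord 1 3 (by omega) (by omega) (by omega) (by omega),
      cNoChord 1 4 (by omega) (by omega) (by omega) (by omega)⟩
  rw [hn7] at h0
  -- the pentagon, extended periodically
  set e : ℕ → V := fun k => c (k % 5) with he
  have hcong : ∀ a b : ℕ, a % 5 = b % 5 → e a = e b := by
    intro a b hab
    show c (a % 5) = c (b % 5)
    rw [hab]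
  have hadj5 : ∀ k, G.Adj (e k) (e (k + 1)) := by
    intro k
    have h5 : k % 5 < 5 := by omega
    show G.Adj (c (k % 5)) (c ((k + 1) % 5))
    by_cases hk4 : k % 5 = 4
    · rw [hk4, show (k + 1) % 5 = 0 by omega, ← h0]
      exact hadjc 4 (by omega)
    · rw [show (k + 1) % 5 = k % 5 + 1 by omega]
      exact hadjc (k % 5) (by omega)
  have hnd2 : ∀ k, ¬G.Adj (e k) (e (k + 2)) := by
    intro k
    have h5 : k % 5 < 5 := by omega
    show ¬G.Adj (c (k % 5)) (c ((k + 2) % 5))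
    by_cases hk3 : k % 5 ≤ 2
    · rw [show (k + 2) % 5 = k % 5 + 2 by omega]
      exact cNoChord (k % 5) (k % 5 + 2) (by omega) (by omega) (by omega) (by omega)
    · rw [show (k + 2) % 5 = k % 5 - 3 by omega]
      intro hadj'
      exact cNoChord (k % 5 - 3) (k % 5) (by omega) (by omega) (by omega) (by omega) hadj'.symm
  have hinj5 : ∀ a b : ℕ, a % 5 ≠ b % 5 → e a ≠ e b := by
    intro a b hab
    have h5a : a % 5 < 5 := by omega
    have h5b : b % 5 < 5 := by omega
    show c (a % 5) ≠ c (b % 5)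
    rcases Nat.lt_or_ge (a % 5) (b % 5) with hlt | hge
    · exact cinj _ _ hlt (by omega) (by omega)
    · exact (cinj _ _ (by omega) (by omega) (by omega)).symm
  have setup : CycSetup G e :=
    ⟨hcong, hadj5, hnd2, hinj5,
     fun a b x h1 h2 h3 => htri _ (SimpleGraph.is3Clique_triple_iff.mpr ⟨h1, h2, h3⟩),
     fun a b cc d n1 n2 n3 n4 n5 n6 e1 e2 m1 m2 m3 m4 =>
       hgap ⟨a, b, cc, d, n1, n2, n3, n4, n5, n6, e1, e2, m1, m2, m3, m4⟩⟩
  set p : V → ℕ := fun v => Classical.choose (setup.spec_exists hiso v) with hpdef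
  have hp : ∀ v, Spec G e v (p v) := fun v => Classical.choose_spec (setup.spec_exists hiso v)
  have hf' : ∀ v, Spec G e v (p v % 5) := fun v => setup.spec_cong (by omega) (hp v)
  set f : V → Fin 5 := fun v => ⟨p v % 5, by omega⟩ with hfdef
  have hval : ∀ v, (f v : ℕ) = p v % 5 := fun v => rfl
  have main_iff : ∀ x y : V, G.Adj x y ↔ (cycG 5).Adj (f x) (f y) := by
    intro x y
    rw [cyc5_adj, hval x, hval y, setup.spec_adj_iff (hf' x) (hf' y)]
    omega
  have hsur : Function.Surjective f := by
    intro i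
    refine ⟨e (i : ℕ), ?_⟩
    have h1 := setup.spec_unique (hf' (e (i : ℕ))) (setup.spec_e (i : ℕ))
    have h2 := i.isLt
    apply Fin.ext
    rw [hval]
    omega
  refine ⟨⟨f, hsur, main_iff⟩, ?_, ?_⟩
  · refine ⟨fun i => e (i : ℕ), ?_, ?_⟩
    · intro i j hij
      by_contra hne
      have hvne : (i : ℕ) ≠ (j : ℕ) := fun hh => hne (Fin.ext hh)
      have h2 := i.isLt
      have h3 := j.isLt
      exact hinj5 _ _ (by omega) hij
    · intro i j
      rw [cyc5_adj, setup.spec_adj_iff (setup.spec_e (i : ℕ)) (setup.spec_e (j : ℕ))]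
      have h2 := i.isLt
      have h3 := j.isLt
      omega
  · intro v
    have hval2 : ∀ j : Fin 5,
        Spec G e (if j = f v then v else e (j : ℕ)) (j : ℕ) := by
      intro j
      by_cases hj : j = f v
      · rw [if_pos hj, hj, hval v]
        exact hf' v
      · rw [if_neg hj]
        exact setup.spec_e _
    refine ⟨fun j => if j = f v then v else e (j : ℕ), ?_, ?_, ⟨f v, if_pos rfl⟩⟩
    · intro a b hab
      have hab' : (if a = f v then v else e (a : ℕ)) = (if b = f v then v else e (b : ℕ)) := hab
      have h1 := setup.spec_unique (hab' ▸ hval2 a) (hval2 b)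
      have h2 := a.isLt
      have h3 := b.isLt
      exact Fin.ext (by omega)
    · intro i j
      rw [cyc5_adj, setup.spec_adj_iff (hval2 i) (hval2 j)]
      have h2 := i.isLt
      have h3 := j.isLt
      omega
end

section
/- Let H be a graph, u a vertex of H, and let G be obtained from H by multiplying u by an independent set U. If C is an induced cycle of G on n ≥ 5 vertices, then C contains at most one vertex from U. In particular, if H has no induced cycle of length n (n ≥ 5), then neither does G. -/
open SimpleGraph

private lemma modsucc {n x : ℕ} (hx : x < n) :
    (x + 1) % n = if x + 1 = n then 0 else x + 1 := by
  split_ifs with h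
  · rw [h, Nat.mod_self]
  · exact Nat.mod_eq_of_lt (by omega)

private lemma twostep {n x : ℕ} (hn : 5 ≤ n) (hx : x < n) :
    ((x + 1) % n + 1) % n = if x + 2 < n then x + 2 else x + 2 - n := by
  rw [modsucc hx]
  split_ifs with h1 h2 h3
  · omega
  · rw [Nat.zero_add, Nat.mod_eq_of_lt (by omega)]; omega
  · exact Nat.mod_eq_of_lt h3
  · have h : x + 2 = n := by omega
    rw [h, Nat.mod_self]; omega

private lemma arith {n a b : ℕ} (hn : 5 ≤ n) (ha : a < n) (hb : b < n)
    (h1 : b = ((a + 1) % n + 1) % n) (h2 : a = ((b + 1) % n + 1) % n) : False := by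
  rw [twostep hn ha] at h1
  rw [twostep hn hb] at h2
  split_ifs at h1 h2 <;> omega

private lemma vm_adj_inl_inl {V : Type*} {U : Type*} (H : SimpleGraph V) (u : V)
    (x y : {x : V // x ≠ u}) :
    (VertexMul U H u).Adj (Sum.inl x) (Sum.inl y) ↔ H.Adj x.1 y.1 := by
  simp only [VertexMul, fromRel_adj]
  constructor
  · rintro ⟨h, h1 | h1⟩
    · exact h1
    · exact h1.symm
  · intro h
    refine ⟨?_, Or.inl h⟩
    intro e
    exact H.irrefl (by rwa [Subtype.ext_iff.1 (Sum.inl.inj e)] at h)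

private lemma vm_adj_inl_inr {V : Type*} {U : Type*} (H : SimpleGraph V) (u : V)
    (x : {x : V // x ≠ u}) (a : U) :
    (VertexMul U H u).Adj (Sum.inl x) (Sum.inr a) ↔ H.Adj x.1 u := by
  simp only [VertexMul, fromRel_adj]
  constructor
  · rintro ⟨h, h1 | h1⟩ <;> exact h1
  · intro h
    exact ⟨by simp, Or.inl h⟩

private lemma vm_not_adj_inr_inr {V : Type*} {U : Type*} (H : SimpleGraph V) (u : V)
    (a b : U) : ¬ (VertexMul U H u).Adj (Sum.inr a) (Sum.inr b) := by
  simp [VertexMul, fromRel_adj]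

private lemma cycG_adj {n : ℕ} (i j : Fin n) :
    (cycG n).Adj i j ↔ i ≠ j ∧ ((j : ℕ) = ((i : ℕ) + 1) % n ∨ (i : ℕ) = ((j : ℕ) + 1) % n) := by
  simp [cycG, fromRel_adj]

/-- If G is obtained from H by multiplying a vertex u by an independent set U, then any
induced cycle of G on n ≥ 5 vertices contains at most one vertex of U; in particular if H
has no induced n-cycle then neither does G. -/
theorem stmt_14 {V U : Type*} (H : SimpleGraph V) (u : V) (n : ℕ) (hn : 5 ≤ n) :
    (∀ f : Fin n → ({x : V // x ≠ u} ⊕ U), Function.Injective f →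
      (∀ i j, (VertexMul U H u).Adj (f i) (f j) ↔ (cycG n).Adj i j) →
      ∀ i j : Fin n, (∃ a, f i = Sum.inr a) → (∃ b, f j = Sum.inr b) → i = j) ∧
    (¬ HasInducedCycle H n → ¬ HasInducedCycle (VertexMul U H u) n) := by
  have key : ∀ f : Fin n → ({x : V // x ≠ u} ⊕ U), Function.Injective f →
      (∀ i j, (VertexMul U H u).Adj (f i) (f j) ↔ (cycG n).Adj i j) →
      ∀ i j : Fin n, (∃ a, f i = Sum.inr a) → (∃ b, f j = Sum.inr b) → i = j := by
    intro f hinj hadj i j ⟨a, ha⟩ ⟨b, hb⟩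
    by_contra hij
    have hnadj : ¬ (VertexMul U H u).Adj (f i) (f j) := by
      rw [ha, hb]; exact vm_not_adj_inr_inr H u a b
    -- successor of i
    have hlt : ∀ k : Fin n, ((k : ℕ) + 1) % n < n := fun k => Nat.mod_lt _ (by omega)
    have succ_adj : ∀ k : Fin n, (cycG n).Adj k ⟨((k : ℕ) + 1) % n, hlt k⟩ := by
      intro k
      rw [cycG_adj]
      refine ⟨?_, Or.inl rfl⟩
      intro h
      have h2 : (k : ℕ) = ((k : ℕ) + 1) % n := congrArg Fin.val h
      rw [modsucc k.isLt] at h2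
      split_ifs at h2 <;> omega
    -- the successor of an inr-index maps to an inl vertex adjacent to u,
    -- hence adjacent to the other inr vertex
    have main : ∀ k l : Fin n, ∀ c d : U, f k = Sum.inr c → f l = Sum.inr d →
        (cycG n).Adj ⟨((k : ℕ) + 1) % n, hlt k⟩ l := by
      intro k l c d hk hl
      have hG1 : (VertexMul U H u).Adj (f k) (f ⟨((k : ℕ) + 1) % n, hlt k⟩) :=
        (hadj _ _).2 (succ_adj k)
      rcases hfk' : f ⟨((k : ℕ) + 1) % n, hlt k⟩ with x | e
      · rw [hk, hfk'] at hG1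
        rw [(VertexMul U H u).adj_comm, vm_adj_inl_inr] at hG1
        have hGkl : (VertexMul U H u).Adj (f ⟨((k : ℕ) + 1) % n, hlt k⟩) (f l) := by
          rw [hfk', hl, vm_adj_inl_inr]; exact hG1
        exact (hadj _ _).1 hGkl
      · rw [hk, hfk'] at hG1
        exact absurd hG1 (vm_not_adj_inr_inr H u c e)
    have hc1 := main i j a b ha hb
    have hc2 := main j i b a hb ha
    rw [cycG_adj] at hc1 hc2
    have h1' : (j : ℕ) = (((i : ℕ) + 1) % n + 1) % n ∨ ((i : ℕ) + 1) % n = ((j : ℕ) + 1) % n :=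
      hc1.2
    have h2' : (i : ℕ) = (((j : ℕ) + 1) % n + 1) % n ∨ ((j : ℕ) + 1) % n = ((i : ℕ) + 1) % n :=
      hc2.2
    have heq : ((i : ℕ) + 1) % n = ((j : ℕ) + 1) % n → False := by
      intro h
      rw [modsucc i.isLt, modsucc j.isLt] at h
      refine hij (Fin.ext ?_)
      split_ifs at h <;> omega
    rcases h1' with h1 | h1
    · rcases h2' with h2 | h2
      · exact arith hn i.isLt j.isLt h1 h2
      · exact heq h2.symm
    · exact heq h1
  refine ⟨key, ?_⟩
  intro hH hG
  obtain ⟨f, hinj, hadj⟩ := hG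
  apply hH
  refine ⟨fun i => Sum.elim (fun x => x.1) (fun _ => u) (f i), ?_, ?_⟩
  · intro i j hgij
    rcases hfi : f i with x | a <;> rcases hfj : f j with y | b <;>
      simp only [hfi, hfj, Sum.elim_inl, Sum.elim_inr] at hgij
    · exact hinj (by rw [hfi, hfj]; exact congrArg Sum.inl (Subtype.ext hgij))
    · exact absurd hgij x.2
    · exact absurd hgij.symm y.2
    · exact key f hinj hadj i j ⟨a, hfi⟩ ⟨b, hfj⟩
  · intro i j
    rcases hfi : f i with x | a <;> rcases hfj : f j with y | b <;>
      simp only [hfi, hfj, Sum.elim_inl, Sum.elim_inr]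
    · rw [← hadj i j, hfi, hfj, vm_adj_inl_inl]
    · rw [← hadj i j, hfi, hfj, vm_adj_inl_inr]
    · rw [← hadj i j, hfi, hfj, adj_comm, (VertexMul U H u).adj_comm, vm_adj_inl_inr]
    · have hij := key f hinj hadj i j ⟨a, hfi⟩ ⟨b, hfj⟩
      subst hij
      exact iff_of_false (H.irrefl) ((cycG n).irrefl)
end

section
/- Let G be a connected gap-free finite simple graph with no isolated vertices, clique number exactly 3, containing an induced 5-cycle, and diamond-free. Then G contains a dominating triangle, and every vertex outside this triangle has exactly one neighbor in it; moreover G is not bipartite. -/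
open SimpleGraph

/-- A connected gap-free diamond-free graph with no isolated vertices, clique number 3 and
an induced 5-cycle has a dominating triangle in which every outside vertex has exactly one
neighbor, and is not bipartite. -/
theorem stmt_19 {V : Type*} [Fintype V] (G : SimpleGraph V)
    (hconn : G.Connected) (hgap : IsGapFree G)
    (hiso : ∀ v : V, ∃ w, G.Adj v w)
    (hw : cliqueNum' G = 3) (h5 : HasInducedCycle G 5) (hdia : IsDiamondFree G) :
    (∃ a b c : V, G.Adj a b ∧ G.Adj a c ∧ G.Adj b c ∧
      ∀ v : V, v ∉ ({a, b, c} : Set V) →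
        ∃! w, w ∈ ({a, b, c} : Set V) ∧ G.Adj v w) ∧
    ¬ G.Colorable 2 := by
  classical
  -- The set of clique sizes is nonempty and bounded above.
  have hbdd : BddAbove {n | ∃ s : Finset V, G.IsNClique n s} := by
    refine ⟨Fintype.card V, ?_⟩
    rintro n ⟨s, hs⟩
    rw [← hs.2]
    exact Finset.card_le_univ s
  have hne : {n | ∃ s : Finset V, G.IsNClique n s}.Nonempty :=
    ⟨0, ∅, by simp [SimpleGraph.isNClique_iff]⟩
  -- there is a triangle
  have h3 : ∃ s : Finset V, G.IsNClique 3 s := by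
    have hmem := Nat.sSup_mem hne hbdd
    rw [show sSup {n | ∃ s : Finset V, G.IsNClique n s} = cliqueNum' G from rfl, hw] at hmem
    exact hmem
  -- no 4 pairwise adjacent vertices
  have h4 : ∀ a b c d : V, G.Adj a b → G.Adj a c → G.Adj a d → G.Adj b c → G.Adj b d →
      G.Adj c d → False := by
    intro a b c d Aab Aac Aad Abc Abd Acd
    have hab := Aab.ne; have hac := Aac.ne; have had := Aad.ne
    have hbc := Abc.ne; have hbd := Abd.ne; have hcd := Acd.ne
    have hclique : G.IsNClique 4 {a, b, c, d} := by
      constructor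
      · have Aba := Aab.symm; have Aca := Aac.symm; have Ada := Aad.symm
        have Acb := Abc.symm; have Adb := Abd.symm; have Adc := Acd.symm
        intro x hx y hy hxy
        simp only [Finset.coe_insert, Set.mem_insert_iff, Finset.coe_singleton,
          Set.mem_singleton_iff] at hx hy
        rcases hx with rfl | rfl | rfl | rfl <;> rcases hy with rfl | rfl | rfl | rfl <;>
          first | exact absurd rfl hxy | assumption
      · rw [Finset.card_insert_of_notMem (by simp [hab, hac, had]),
          Finset.card_insert_of_notMem (by simp [hbc, hbd]),
          Finset.card_insert_of_notMem (by simp [hcd]), Finset.card_singleton]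
    have : (4 : ℕ) ≤ cliqueNum' G := le_csSup hbdd ⟨{a, b, c, d}, hclique⟩
    omega
  -- diamond helper: a vertex adjacent to exactly two vertices of a triangle gives a diamond
  have hDia : ∀ x y z w : V, w ≠ x → w ≠ y → w ≠ z →
      G.Adj x y → G.Adj x z → G.Adj y z → G.Adj w x → G.Adj w y → ¬ G.Adj w z → False := by
    intro x y z w hwx hwy hwz Axy Axz Ayz Awx Awy Awz
    exact hdia ⟨x, w, y, z, Ne.symm hwx, Axy.ne, Axz.ne, hwy, hwz, Ayz.ne,
      Awx.symm, Axy, Awy, Axz, Ayz, Awz⟩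
  -- a vertex outside a triangle cannot be adjacent to two of its vertices
  have htwo : ∀ x y z v : V, G.Adj x y → G.Adj x z → G.Adj y z →
      v ≠ x → v ≠ y → v ≠ z → G.Adj v x → G.Adj v y → False := by
    intro x y z v Axy Axz Ayz hvx hvy hvz Avx Avy
    by_cases hvzadj : G.Adj v z
    · exact h4 x y z v Axy Axz Avx.symm Ayz Avy.symm hvzadj.symm
    · exact hDia x y z v hvx hvy hvz Axy Axz Ayz Avx Avy hvzadj
  obtain ⟨s, hsclique, hscard⟩ := h3
  obtain ⟨a, b, c, hab, hac, hbc, rfl⟩ := Finset.card_eq_three.mp hscard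
  have Aab : G.Adj a b := hsclique (by simp) (by simp) hab
  have Aac : G.Adj a c := hsclique (by simp) (by simp) hac
  have Abc : G.Adj b c := hsclique (by simp) (by simp) hbc
  refine ⟨⟨a, b, c, Aab, Aac, Abc, ?_⟩, ?_⟩
  · intro v hv
    simp only [Set.mem_insert_iff, Set.mem_singleton_iff, not_or] at hv
    obtain ⟨hva, hvb, hvc⟩ := hv
    -- v has a neighbor in the triangle
    have hdom : ∃ w, w ∈ ({a, b, c} : Set V) ∧ G.Adj v w := by
      by_contra hno
      push_neg at hno
      have hnva : ¬ G.Adj v a := hno a (by simp)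
      have hnvb : ¬ G.Adj v b := hno b (by simp)
      have hnvc : ¬ G.Adj v c := hno c (by simp)
      obtain ⟨w, hvw⟩ := hiso v
      have hwa : w ≠ a := fun h => hnva (h ▸ hvw)
      have hwb : w ≠ b := fun h => hnvb (h ▸ hvw)
      have hwc : w ≠ c := fun h => hnvc (h ▸ hvw)
      have hab2 : G.Adj w a ∨ G.Adj w b := by
        by_contra h
        push_neg at h
        exact hgap ⟨a, b, v, w, Aab.ne, Ne.symm hva, Ne.symm hwa, Ne.symm hvb, Ne.symm hwb,
          hvw.ne, Aab, hvw, fun h' => hnva h'.symm, fun h' => h.1 h'.symm,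
          fun h' => hnvb h'.symm, fun h' => h.2 h'.symm⟩
      have hac2 : G.Adj w a ∨ G.Adj w c := by
        by_contra h
        push_neg at h
        exact hgap ⟨a, c, v, w, Aac.ne, Ne.symm hva, Ne.symm hwa, Ne.symm hvc, Ne.symm hwc,
          hvw.ne, Aac, hvw, fun h' => hnva h'.symm, fun h' => h.1 h'.symm,
          fun h' => hnvc h'.symm, fun h' => h.2 h'.symm⟩
      have hbc2 : G.Adj w b ∨ G.Adj w c := by
        by_contra h
        push_neg at h
        exact hgap ⟨b, c, v, w, Abc.ne, Ne.symm hvb, Ne.symm hwb, Ne.symm hvc, Ne.symm hwc,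
          hvw.ne, Abc, hvw, fun h' => hnvb h'.symm, fun h' => h.1 h'.symm,
          fun h' => hnvc h'.symm, fun h' => h.2 h'.symm⟩
      have h2of3 : (G.Adj w a ∧ G.Adj w b) ∨ (G.Adj w a ∧ G.Adj w c) ∨
          (G.Adj w b ∧ G.Adj w c) := by tauto
      rcases h2of3 with ⟨h1, h2⟩ | ⟨h1, h2⟩ | ⟨h1, h2⟩
      · exact htwo a b c w Aab Aac Abc hwa hwb hwc h1 h2
      · exact htwo a c b w Aac Aab Abc.symm hwa hwc hwb h1 h2
      · exact htwo b c a w Abc Aab.symm Aac.symm hwb hwc hwa h1 h2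
    obtain ⟨w, hwmem, hvw⟩ := hdom
    refine ⟨w, ⟨hwmem, hvw⟩, ?_⟩
    have key : ∀ p q : V, (p = a ∨ p = b ∨ p = c) → (q = a ∨ q = b ∨ q = c) →
        G.Adj v p → G.Adj v q → p ≠ q → False := by
      intro p q hp hq hvp hvq hpq
      rcases hp with h | h | h <;> rcases hq with h' | h' | h' <;>
        rw [h] at hvp <;> rw [h'] at hvq <;>
        first
          | exact hpq (h.trans h'.symm)
          | exact htwo a b c v Aab Aac Abc hva hvb hvc hvp hvq
          | exact htwo a b c v Aab Aac Abc hva hvb hvc hvq hvp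
          | exact htwo a c b v Aac Aab Abc.symm hva hvc hvb hvp hvq
          | exact htwo a c b v Aac Aab Abc.symm hva hvc hvb hvq hvp
          | exact htwo b c a v Abc Aab.symm Aac.symm hvb hvc hva hvp hvq
          | exact htwo b c a v Abc Aab.symm Aac.symm hvb hvc hva hvq hvp
    rintro y ⟨hymem, hvy⟩
    by_contra hne'
    simp only [Set.mem_insert_iff, Set.mem_singleton_iff] at hymem hwmem
    exact key y w hymem hwmem hvy hvw hne'
  · rintro ⟨C⟩
    have h1 : C a ≠ C b := C.valid Aab
    have h2 : C b ≠ C c := C.valid Abc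
    have h3 : C a ≠ C c := C.valid Aac
    have e1 : (C a).val ≠ (C b).val := fun h => h1 (Fin.val_injective h)
    have e2 : (C b).val ≠ (C c).val := fun h => h2 (Fin.val_injective h)
    have e3 : (C a).val ≠ (C c).val := fun h => h3 (Fin.val_injective h)
    have l1 := (C a).isLt
    have l2 := (C b).isLt
    have l3 := (C c).isLt
    omega
end
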